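/- Let α ∈ {+,−} and let G be a round α-radial with root r, with almost strong ground H. Let G′ be obtained from G by deleting all edges between r and V(G)∖V(H) and then contracting V(H) to a single vertex h. Then G′ is a sharp α-semiradial with root h. -/

import Mathlib

/-- A bidirected graph on vertex type `V`: each edge has two ends (`fst`, `snd`),
each carrying a sign (`true` = `+`, `false` = `-`). Loops are edges with `fst = snd`. -/
structure BG (V : Type) where
  E : Type
  fst : E → V
  snd : E → V
  s1 : E → Bool
  s2 : E → Bool

namespace BG

variable {V : Type}

/-- A step is a traversal of an edge in one of the two directions. -/
abbrev Step (G : BG V) : Type := G.E × Bool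

variable (G : BG V)

def src (st : G.Step) : V := if st.2 then G.fst st.1 else G.snd st.1
def tgt (st : G.Step) : V := if st.2 then G.snd st.1 else G.fst st.1
/-- sign of the edge at the source end of the step -/
def ssign (st : G.Step) : Bool := if st.2 then G.s1 st.1 else G.s2 st.1
/-- sign of the edge at the target end of the step -/
def tsign (st : G.Step) : Bool := if st.2 then G.s2 st.1 else G.s1 st.1

/-- `p` is a ditrail from `x` to `y`: an edge-simple walk such that at each internal
vertex the sign of the entering edge-end and the sign of the leaving edge-end are opposite. -/
def IsDitrail (p : List G.Step) (x y : V) : Prop :=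
  (p.map Prod.fst).Nodup ∧
  List.Chain' (fun a b => G.tgt a = G.src b ∧ G.tsign a = !G.ssign b) p ∧
  (∀ st, p.head? = some st → G.src st = x) ∧
  (∀ st, p.getLast? = some st → G.tgt st = y) ∧
  (p = [] → x = y)

/-- There is an `(α, β)`-ditrail from `x` to `y` using only edges from `Es` and avoiding
the vertex set `A`.  The trivial (empty) ditrail from `x` to `x` counts as an
`(!β, β)`-ditrail for each `β`. -/
def ReachWA (Es : Set G.E) (A : Set V) (α β : Bool) (x y : V) : Prop :=
  ∃ p : List G.Step, G.IsDitrail p x y ∧ (∀ st ∈ p, st.1 ∈ Es) ∧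
    x ∉ A ∧ (∀ st ∈ p, G.tgt st ∉ A) ∧
    (p.head?.map G.ssign).getD (!β) = α ∧ (p.getLast?.map G.tsign).getD β = β

/-- There is an `(α, β)`-ditrail from `x` to `y` using only edges from `Es`. -/
def ReachW (Es : Set G.E) (α β : Bool) (x y : V) : Prop := G.ReachWA Es ∅ α β x y

/-- There is an `(α, β)`-ditrail from `x` to `y` in `G`. -/
def Reach (α β : Bool) (x y : V) : Prop := G.ReachW Set.univ α β x y

/-- There is an `α`-ditrail from `x` to `y` in `G` (only the starting sign is constrained). -/
def ReachS (α : Bool) (x y : V) : Prop := ∃ β, G.Reach α β x y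

/-- There is an `α`-ditrail from `x` to `y` using only edges from `Es`. -/
def ReachWS (Es : Set G.E) (α : Bool) (x y : V) : Prop := ∃ β, G.ReachW Es α β x y

def Adj (u v : V) : Prop :=
  ∃ e : G.E, (G.fst e = u ∧ G.snd e = v) ∨ (G.fst e = v ∧ G.snd e = u)

/-- `G` is an `α`-radial with root `r`. -/
def IsRadial (α : Bool) (r : V) : Prop := ∀ v, G.Reach α (!α) v r
/-- `G` is an `α`-semiradial with root `r`. -/
def IsSemiradial (α : Bool) (r : V) : Prop := ∀ v, G.ReachS α v r

/-- `x` is an (`α`-)strong vertex with respect to `r`. -/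
def StrongVtx (α : Bool) (r x : V) : Prop :=
  G.Reach α (!α) x r ∧ G.Reach (!α) (!α) x r
/-- `x` is a sublinear vertex with respect to `r`. -/
def SublinearVtx (α : Bool) (r x : V) : Prop :=
  G.Reach α (!α) x r ∧ ¬ G.Reach (!α) (!α) x r
/-- `x` is an absolute vertex with respect to `r`. -/
def AbsoluteVtx (r x : V) : Prop := ∀ α : Bool, G.ReachS α x r
/-- `x` is an `α`-linear vertex with respect to `r`. -/
def LinearVtx (α : Bool) (r x : V) : Prop := G.ReachS α x r ∧ ¬ G.ReachS (!α) x r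

/-- sharpness at the root: every neighbor of `r` is linear. -/
def SharpAt (α : Bool) (r : V) : Prop := ∀ v, G.Adj v r → G.LinearVtx α r v

/-- `v` is joined to `r` by an edge whose end at `r` has sign `!α`. -/
def OppNbr (α : Bool) (r v : V) : Prop :=
  ∃ e : G.E, (G.fst e = r ∧ G.snd e = v ∧ G.s1 e = !α) ∨
    (G.snd e = r ∧ G.fst e = v ∧ G.s2 e = !α)

/-- roundness: every vertex joined to `r` by an edge whose end at `r` has sign `!α` is strong. -/
def RoundAt (α : Bool) (r : V) : Prop := ∀ v, G.OppNbr α r v → G.StrongVtx α r v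

/-- `e` is a cut edge of `S` whose end in `S` carries the sign `γ`. -/
def CutSign (S : Set V) (γ : Bool) (e : G.E) : Prop :=
  (G.fst e ∈ S ∧ G.snd e ∉ S ∧ G.s1 e = γ) ∨
  (G.snd e ∈ S ∧ G.fst e ∉ S ∧ G.s2 e = γ)

/-- edges of the subgraph of `G` induced by `S` -/
def inducedEdges (S : Set V) : Set G.E := {e | G.fst e ∈ S ∧ G.snd e ∈ S}

/-- a simple diear relative to `S`: a nonempty ditrail whose first and last vertices
lie in `S` and whose internal vertices avoid `S`. -/
def IsSimpleDiear (S : Set V) (p : List G.Step) : Prop :=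
  p ≠ [] ∧ ∃ u v, G.IsDitrail p u v ∧ u ∈ S ∧ v ∈ S ∧
    ∀ w ∈ p.dropLast.map G.tgt, w ∉ S

/-- a scoop diear relative to `S` with grip `e`: of the form `(y,e,x) + P` where `y ∈ S`,
`x ∉ S`, and `P` is a ditrail from `x` back to `y` ending with the reverse traversal of `e`,
whose internal vertices avoid `S`. -/
def IsScoopDiear (S : Set V) (e : G.E) (p : List G.Step) : Prop :=
  ∃ d q, p = (e, d) :: q ∧ G.src (e, d) ∈ S ∧ G.tgt (e, d) ∉ S ∧
    G.IsDitrail q (G.tgt (e, d)) (G.src (e, d)) ∧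
    q.getLast? = some (e, !d) ∧
    (∀ st, q.head? = some st → G.ssign st = !(G.tsign (e, d))) ∧
    ∀ w ∈ q.dropLast.map G.tgt, w ∉ S

/-- A subgraph of `G`. -/
structure Sub (G : BG V) where
  verts : Set V
  edges : Set G.E
  fst_mem : ∀ e ∈ edges, G.fst e ∈ verts
  snd_mem : ∀ e ∈ edges, G.snd e ∈ verts

variable {G}

def Sub.le (K L : G.Sub) : Prop := K.verts ⊆ L.verts ∧ K.edges ⊆ L.edges

def Sub.union (K L : G.Sub) : G.Sub where
  verts := K.verts ∪ L.verts
  edges := K.edges ∪ L.edges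
  fst_mem := fun e he => he.elim (fun h => Or.inl (K.fst_mem e h)) (fun h => Or.inr (L.fst_mem e h))
  snd_mem := fun e he => he.elim (fun h => Or.inl (K.snd_mem e h)) (fun h => Or.inr (L.snd_mem e h))

/-- the subgraph `K` is an `α`-semiradial with root `r`. -/
def Sub.IsSemiradial (K : G.Sub) (α : Bool) (r : V) : Prop :=
  r ∈ K.verts ∧ ∀ v ∈ K.verts, G.ReachWS K.edges α v r

/-- the subgraph `K` is an absolute semiradial with root `r`. -/
def Sub.IsAbsolute (K : G.Sub) (r : V) : Prop := ∀ α : Bool, K.IsSemiradial α r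

/-- the subgraph `K` is an `α`-radial with root `r`. -/
def Sub.IsRadial (K : G.Sub) (α : Bool) (r : V) : Prop :=
  r ∈ K.verts ∧ ∀ v ∈ K.verts, G.ReachW K.edges α (!α) v r

/-- the subgraph `K` is a strong `α`-radial with root `r`. -/
def Sub.IsStrong (K : G.Sub) (α : Bool) (r : V) : Prop :=
  K.IsRadial α r ∧ ∀ v ∈ K.verts, G.ReachW K.edges (!α) (!α) v r

/-- the subgraph `K` is an almost strong `α`-radial with root `r`. -/
def Sub.IsAlmostStrong (K : G.Sub) (α : Bool) (r : V) : Prop :=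
  K.IsRadial α r ∧ (∀ v ∈ K.verts, v ≠ r → G.ReachW K.edges (!α) (!α) v r) ∧
    ¬ G.ReachW K.edges (!α) (!α) r r

/-- the subgraph `K` is a linear `α`-semiradial with root `r`: no loop at `r`,
and no nontrivial `(!α)`-ditrail (within `K`) to `r`. -/
def Sub.IsLinearSR (K : G.Sub) (α : Bool) (r : V) : Prop :=
  K.IsSemiradial α r ∧ (¬ ∃ e ∈ K.edges, G.fst e = r ∧ G.snd e = r) ∧
    ∀ x p st, G.IsDitrail p x r → (∀ st' ∈ p, st'.1 ∈ K.edges) →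
      p.head? = some st → G.ssign st = α

/-- candidate for the linear ground: a linear `α`-semiradial with root `r`
all of whose non-root vertices are linear in `G`. -/
def Sub.IsLinearGroundCand (K : G.Sub) (α : Bool) (r : V) : Prop :=
  K.IsLinearSR α r ∧ ∀ v ∈ K.verts, v ≠ r → G.LinearVtx α r v

/-- candidate for the extended ground over the almost strong ground `H`. -/
def Sub.IsExtCand (H K : G.Sub) (α : Bool) (r : V) : Prop :=
  H.le K ∧ K.IsRadial α r ∧ ∀ v ∈ K.verts, v ∉ H.verts → G.SublinearVtx α r v

/-- the first shell of the extended ground `I` over the almost strong ground `H`: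
shell vertices having an `(α,!α)`-ditrail to `r` within `I` avoiding `V(H) \ {r}`. -/
def firstShell (H I : G.Sub) (α : Bool) (r : V) : Set V :=
  {x | x ∈ I.verts ∧ x ∉ H.verts ∧ G.ReachWA I.edges (H.verts \ {r}) α (!α) x r}

/-- adding new edges to `G`: each `f : F` becomes an edge between `a f` and `b f`
with signs `sa f` and `sb f` at these ends. -/
def addE (G : BG V) {F : Type} (a b : F → V) (sa sb : F → Bool) : BG V where
  E := G.E ⊕ F
  fst := Sum.elim G.fst a
  snd := Sum.elim G.snd b
  s1 := Sum.elim G.s1 sa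
  s2 := Sum.elim G.s2 sb

/-- deleting the edges in `D` from `G`. -/
def delE (G : BG V) (D : Set G.E) : BG V where
  E := {e : G.E // e ∉ D}
  fst e := G.fst e.1
  snd e := G.snd e.1
  s1 e := G.s1 e.1
  s2 e := G.s2 e.1

/-- contracting the vertex set `S` of `G` to the single vertex `r` (deleting the
edges lying within `S`, i.e. the arising loops). -/
noncomputable def contract (G : BG V) (S : Set V) (r : V) : BG V where
  E := {e : G.E // ¬(G.fst e ∈ S ∧ G.snd e ∈ S)}
  fst e := @ite _ (G.fst e.1 ∈ S) (Classical.propDecidable _) r (G.fst e.1)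
  snd e := @ite _ (G.snd e.1 ∈ S) (Classical.propDecidable _) r (G.snd e.1)
  s1 e := G.s1 e.1
  s2 e := G.s2 e.1

/-- a gluing sum `(G; s) ⊕ (H; T)`: every edge-end of `G` at `s` is redirected
to some vertex of `H` (given by `f1`, `f2`), keeping all signs. -/
noncomputable def glue {VG VH : Type} (G : BG VG) (H : BG VH) (s : VG)
    (f1 f2 : G.E → VH) : BG (VG ⊕ VH) where
  E := G.E ⊕ H.E
  fst := Sum.elim
    (fun e => @ite _ (G.fst e = s) (Classical.propDecidable _)
      (Sum.inr (f1 e)) (Sum.inl (G.fst e)))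
    (fun e => Sum.inr (H.fst e))
  snd := Sum.elim
    (fun e => @ite _ (G.snd e = s) (Classical.propDecidable _)
      (Sum.inr (f2 e)) (Sum.inl (G.snd e)))
    (fun e => Sum.inr (H.snd e))
  s1 := Sum.elim G.s1 H.s1
  s2 := Sum.elim G.s2 H.s2

/-- the copy of `H` inside a gluing sum, as a subgraph. -/
noncomputable def glueHcopy {VG VH : Type} (G : BG VG) (H : BG VH) (s : VG)
    (f1 f2 : G.E → VH) : (glue G H s f1 f2).Sub where
  verts := Set.range Sum.inr
  edges := Set.range Sum.inr
  fst_mem := by rintro _ ⟨e, rfl⟩; exact ⟨H.fst e, rfl⟩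
  snd_mem := by rintro _ ⟨e, rfl⟩; exact ⟨H.snd e, rfl⟩

end BG

namespace BG

variable {V : Type}
variable (G : BG V)

-- ====================== auxiliary layer ======================

/-- `p` is a ditrail from `x` to `y`, starting with sign `a` and ending with sign `b`
(with the convention that the empty trail has `x = y` and `a = !b`). -/
def DT (p : List G.Step) (x y : V) (a b : Bool) : Prop :=
  G.IsDitrail p x y ∧ (p.head?.map G.ssign).getD (!b) = a ∧
    (p.getLast?.map G.tsign).getD b = b

variable {G}

lemma reachW_iff_dt {Es : Set G.E} {a b : Bool} {x y : V} :
    G.ReachW Es a b x y ↔ ∃ p, G.DT p x y a b ∧ ∀ st ∈ p, st.1 ∈ Es := by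
  constructor
  · rintro ⟨p, h1, h2, -, -, h5, h6⟩; exact ⟨p, ⟨h1, h5, h6⟩, h2⟩
  · rintro ⟨p, ⟨h1, h5, h6⟩, h2⟩
    exact ⟨p, h1, h2, Set.notMem_empty _, fun st _ => Set.notMem_empty _, h5, h6⟩

lemma reachW_mono {Es Es' : Set G.E} (h : Es ⊆ Es') {a b : Bool} {x y : V}
    (hr : G.ReachW Es a b x y) : G.ReachW Es' a b x y := by
  rw [reachW_iff_dt] at hr ⊢
  obtain ⟨p, hp, hmem⟩ := hr
  exact ⟨p, hp, fun st hst => h (hmem st hst)⟩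

namespace DT

lemma nodup {p : List G.Step} {x y a b} (h : G.DT p x y a b) : (p.map Prod.fst).Nodup :=
  h.1.1

lemma chain {p : List G.Step} {x y a b} (h : G.DT p x y a b) :
    List.Chain' (fun s t => G.tgt s = G.src t ∧ G.tsign s = !G.ssign t) p := h.1.2.1

lemma src_head {p : List G.Step} {x y a b} (h : G.DT p x y a b) :
    ∀ st, p.head? = some st → G.src st = x := h.1.2.2.1

lemma tgt_last {p : List G.Step} {x y a b} (h : G.DT p x y a b) :
    ∀ st, p.getLast? = some st → G.tgt st = y := h.1.2.2.2.1

lemma eq_of_nil {p : List G.Step} {x y a b} (h : G.DT p x y a b) : p = [] → x = y :=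
  h.1.2.2.2.2

lemma ssign_head {p : List G.Step} {x y a b} (h : G.DT p x y a b) :
    ∀ st, p.head? = some st → G.ssign st = a := by
  intro st hst
  have := h.2.1
  rw [hst] at this
  simpa using this

lemma tsign_last {p : List G.Step} {x y a b} (h : G.DT p x y a b) :
    ∀ st, p.getLast? = some st → G.tsign st = b := by
  intro st hst
  have := h.2.2
  rw [hst] at this
  simpa using this

lemma sign_of_nil {p : List G.Step} {x y a b} (h : G.DT p x y a b) (hp : p = []) :
    a = !b := by
  have := h.2.1
  rw [hp] at this
  simpa using this.symm

end DT

lemma dt_nil {x : V} {b : Bool} : G.DT [] x x (!b) b := by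
  refine ⟨⟨by simp, List.isChain_nil, by simp, by simp, fun _ => rfl⟩, by simp, by simp⟩

lemma dt_singleton (st : G.Step) : G.DT [st] (G.src st) (G.tgt st) (G.ssign st) (G.tsign st) := by
  refine ⟨⟨by simp, List.isChain_singleton _, ?_, ?_, by simp⟩, by simp, by simp⟩
  · intro s hs; simp at hs; subst hs; rfl
  · intro s hs; simp at hs; subst hs; rfl

lemma dt_cons {p : List G.Step} {y z : V} {c b : Bool} (h : G.DT p y z c b)
    (hp : p ≠ []) (st : G.Step) (h1 : G.tgt st = y) (h2 : G.tsign st = !c)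
    (h3 : st.1 ∉ p.map Prod.fst) :
    G.DT (st :: p) (G.src st) z (G.ssign st) b := by
  obtain ⟨hd, tl, rfl⟩ := List.exists_cons_of_ne_nil hp
  refine ⟨⟨?_, ?_, ?_, ?_, by simp⟩, ?_, ?_⟩
  · rw [List.map_cons, List.nodup_cons]
    exact ⟨h3, h.nodup⟩
  · refine List.isChain_cons_cons.2 ⟨⟨?_, ?_⟩, h.chain⟩
    · rw [h1]; exact (h.src_head hd rfl).symm
    · rw [h2, h.ssign_head hd rfl]
  · intro s hs; simp at hs; subst hs; rfl
  · intro s hs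
    rw [List.getLast?_cons_cons] at hs
    exact h.tgt_last s hs
  · simp
  · rw [List.getLast?_cons_cons]
    exact h.2.2

lemma dt_cons_inv {p : List G.Step} {st : G.Step} {x z : V} {a b : Bool}
    (h : G.DT (st :: p) x z a b) (hp : p ≠ []) :
    G.DT p (G.tgt st) z (!G.tsign st) b ∧ G.src st = x ∧ G.ssign st = a ∧
      st.1 ∉ p.map Prod.fst := by
  obtain ⟨hd, tl, rfl⟩ := List.exists_cons_of_ne_nil hp
  have hch := List.isChain_cons_cons.1 h.chain
  have hnd := h.nodup
  rw [List.map_cons, List.nodup_cons] at hnd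
  refine ⟨⟨⟨hnd.2, hch.2, ?_, ?_, by simp⟩, ?_, ?_⟩, h.src_head st rfl, h.ssign_head st rfl, ?_⟩
  · intro s hs; simp at hs; subst hs; exact hch.1.1.symm
  · intro s hs
    exact h.tgt_last s (by rw [List.getLast?_cons_cons]; exact hs)
  · simp only [List.head?_cons, Option.map_some, Option.getD_some]
    rw [hch.1.2]; simp
  · have := h.2.2
    rwa [List.getLast?_cons_cons] at this
  · exact hnd.1


lemma dt_append {p q : List G.Step} {x y z : V} {a b c : Bool}
    (hp : G.DT p x y a b) (hq : G.DT q y z (!b) c) (hpne : p ≠ []) (hqne : q ≠ [])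
    (hdisj : ∀ st ∈ p, st.1 ∉ q.map Prod.fst) :
    G.DT (p ++ q) x z a c := by
  induction p generalizing x a with
  | nil => exact absurd rfl hpne
  | cons st p ih =>
    rcases eq_or_ne p [] with rfl | hpne'
    · -- p = [st]
      have hsx := hp.src_head st rfl
      have hss := hp.ssign_head st rfl
      have hts := hp.tsign_last st rfl
      have hty := hp.tgt_last st rfl
      have := dt_cons hq hqne st hty (by rw [hts, Bool.not_not]) (hdisj st (by simp))
      rw [hsx, hss] at this
      simpa using this
    · obtain ⟨hdt, hsx, hss, hnm⟩ := dt_cons_inv hp hpne'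
      have := ih hdt hpne' (fun s hs => hdisj s (by simp [hs]))
      have h2 := dt_cons this (by simp [hpne']) st rfl (by simp)
        (by
          simp only [List.map_append, List.mem_append]
          push_neg
          exact ⟨fun hc => hnm hc, fun hc => hdisj st (by simp) hc⟩)
      rw [hsx, hss] at h2
      simpa using h2

def flip (st : G.Step) : G.Step := (st.1, !st.2)

@[simp] lemma src_flip (st : G.Step) : G.src (G.flip st) = G.tgt st := by
  rcases st with ⟨e, d⟩; cases d <;> rfl

@[simp] lemma tgt_flip (st : G.Step) : G.tgt (G.flip st) = G.src st := by
  rcases st with ⟨e, d⟩; cases d <;> rfl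

@[simp] lemma ssign_flip (st : G.Step) : G.ssign (G.flip st) = G.tsign st := by
  rcases st with ⟨e, d⟩; cases d <;> rfl

@[simp] lemma tsign_flip (st : G.Step) : G.tsign (G.flip st) = G.ssign st := by
  rcases st with ⟨e, d⟩; cases d <;> rfl

@[simp] lemma fst_flip (st : G.Step) : (G.flip st).1 = st.1 := rfl

/-- reversal of a ditrail -/
def rev (p : List G.Step) : List G.Step := (p.reverse).map G.flip

@[simp] lemma rev_map_fst (p : List G.Step) :
    ((G.rev p).map Prod.fst) = (p.map Prod.fst).reverse := by
  simp [rev, Function.comp]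

lemma dt_rev {p : List G.Step} {x y : V} {a b : Bool} (hp : G.DT p x y a b) :
    G.DT (G.rev p) y x b a := by
  induction p generalizing x a with
  | nil =>
    have hxy := hp.eq_of_nil rfl
    have hab := hp.sign_of_nil rfl
    subst hxy
    rw [hab]
    have := dt_nil (G := G) (x := x) (b := !b)
    simpa [rev] using this
  | cons st p ih =>
    rcases eq_or_ne p [] with rfl | hpne
    · have hsx := hp.src_head st rfl
      have hss := hp.ssign_head st rfl
      have hts := hp.tsign_last st rfl
      have hty := hp.tgt_last st rfl
      have := dt_singleton (G := G) (G.flip st)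
      simp only [src_flip, tgt_flip, ssign_flip, tsign_flip] at this
      rw [hsx, hss, hts, hty] at this
      simpa [rev] using this
    · obtain ⟨hdt, hsx, hss, hnm⟩ := dt_cons_inv hp hpne
      have hrev := ih hdt
      have hrne : G.rev p ≠ [] := by
        simp [rev, hpne]
      have h2 := dt_append hrev
        (by
          have := dt_singleton (G := G) (G.flip st)
          simp only [src_flip, tgt_flip, ssign_flip, tsign_flip] at this
          rw [show G.tsign st = !(!(G.tsign st)) by simp] at this
          exact this)
        hrne (by simp)
        (by
          intro s hs
          simp only [List.map_cons, List.map_nil, List.mem_cons, List.not_mem_nil, or_false,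
            fst_flip]
          intro hc
          apply hnm
          have : s.1 ∈ (G.rev p).map Prod.fst := List.mem_map_of_mem hs
          rw [rev_map_fst, List.mem_reverse] at this
          rwa [← hc])
      rw [hsx, hss] at h2
      have heq : G.rev (st :: p) = G.rev p ++ [G.flip st] := by
        simp [rev]
      rw [heq]
      exact h2

/-- splitting a ditrail at an occurrence of a step -/
lemma dt_decomp {l₁ l₂ : List G.Step} {st : G.Step} {x y : V} {a b : Bool}
    (h : G.DT (l₁ ++ st :: l₂) x y a b) :
    G.DT (l₁ ++ [st]) x (G.tgt st) a (G.tsign st) ∧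
      (l₂ = [] → G.tgt st = y ∧ G.tsign st = b) ∧
      (l₂ ≠ [] → G.DT l₂ (G.tgt st) y (!G.tsign st) b) := by
  induction l₁ generalizing x a with
  | nil =>
    simp only [List.nil_append] at h ⊢
    constructor
    · rcases eq_or_ne l₂ [] with rfl | hne
      · have hty := h.tgt_last st rfl
        have hts := h.tsign_last st rfl
        rw [hty, hts]
        simpa using h
      · obtain ⟨hdt, hsx, hss, -⟩ := dt_cons_inv h hne
        have := dt_singleton (G := G) st
        rw [hsx, hss] at this
        exact this
    constructor
    · rintro rfl
      exact ⟨h.tgt_last st rfl, h.tsign_last st rfl⟩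
    · intro hne
      exact (dt_cons_inv h hne).1
  | cons s l₁ ih =>
    have hne : l₁ ++ st :: l₂ ≠ [] := by simp
    obtain ⟨hdt, hsx, hss, hnm⟩ := dt_cons_inv (by simpa using h) hne
    obtain ⟨h1, h2, h3⟩ := ih hdt
    refine ⟨?_, h2, h3⟩
    have := dt_cons h1 (by simp) s rfl (by simp) ?_
    · rw [hsx, hss] at this
      simpa using this
    · intro hc
      apply hnm
      simp only [List.map_append, List.mem_append] at hc ⊢
      rcases hc with hc | hc
      · exact Or.inl hc
      · simp at hc
        exact Or.inr (by simp [hc])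

/-- every source of a step of a ditrail is either the start or a target of a
non-final step. -/
lemma dt_src_mem {p : List G.Step} {x y : V} {a b : Bool} (h : G.DT p x y a b) :
    ∀ st ∈ p, G.src st = x ∨ ∃ st' ∈ p.dropLast, G.src st = G.tgt st' := by
  induction p generalizing x a with
  | nil => simp
  | cons s p ih =>
    intro st hst
    rcases eq_or_ne p [] with rfl | hpne
    · simp at hst
      subst hst
      exact Or.inl (h.src_head st rfl)
    obtain ⟨hdt, hsx, -, -⟩ := dt_cons_inv h hpne
    rcases List.mem_cons.1 hst with rfl | hst
    · exact Or.inl hsx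
    · rcases ih hdt st hst with h1 | ⟨st', hst', h2⟩
      · right
        refine ⟨s, ?_, by rw [h1]⟩
        rw [List.dropLast_cons_of_ne_nil hpne]
        simp
      · right
        refine ⟨st', ?_, h2⟩
        rw [List.dropLast_cons_of_ne_nil hpne]
        simp [hst']


-- ======================= ears =======================

/-- helper: each of fst/snd is src or tgt -/
lemma fst_src_or_tgt {G : BG V} (st : G.Step) : G.fst st.1 = G.src st ∨ G.fst st.1 = G.tgt st := by
  rcases st with ⟨e, d⟩; cases d
  · exact Or.inr rfl
  · exact Or.inl rfl

lemma snd_src_or_tgt {G : BG V} (st : G.Step) : G.snd st.1 = G.src st ∨ G.snd st.1 = G.tgt st := by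
  rcases st with ⟨e, d⟩; cases d
  · exact Or.inl rfl
  · exact Or.inr rfl

lemma src_fst_or_snd {G : BG V} (st : G.Step) : G.src st = G.fst st.1 ∨ G.src st = G.snd st.1 := by
  rcases st with ⟨e, d⟩; cases d
  · exact Or.inr rfl
  · exact Or.inl rfl

/-- an admissible ear relative to the vertex set `S`, the root `r` and the sign `α`:
a nonempty ditrail from `v` to a vertex `y ∈ S` whose internal vertices avoid `S`,
and which, if it ends at `r`, arrives there with sign `!α`. -/
structure IsEar (α : Bool) (r : V) (S : Set V) (v : V) (σ : Bool)
    (q : List G.Step) (y : V) (γ : Bool) : Prop where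
  dt : G.DT q v y σ γ
  ne : q ≠ []
  hy : y ∈ S
  internal : ∀ st ∈ q.dropLast, G.tgt st ∉ S
  adm : y = r → γ = !α

namespace IsEar

variable {α : Bool} {r : V} {S : Set V} {v : V} {σ : Bool} {q : List G.Step} {y : V} {γ : Bool}

lemma src_not_S (he : IsEar α r S v σ q y γ) (hv : v ∉ S) :
    ∀ st ∈ q, G.src st ∉ S := by
  intro st hst
  rcases dt_src_mem he.dt st hst with h | ⟨st', hst', h⟩
  · rwa [h]
  · rw [h]; exact he.internal st' hst'

/-- edges of an ear are not induced edges of `S`; in particular they avoid any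
subgraph whose edges all lie inside `S`. -/
lemma edge_not_both (he : IsEar α r S v σ q y γ) (hv : v ∉ S) :
    ∀ st ∈ q, ¬ (G.fst st.1 ∈ S ∧ G.snd st.1 ∈ S) := by
  intro st hst ⟨h1, h2⟩
  rcases src_fst_or_snd st with h | h
  · exact he.src_not_S hv st hst (h ▸ h1)
  · exact he.src_not_S hv st hst (h ▸ h2)

/-- an edge with an endpoint in `S` cannot occur as a non-final edge of an ear. -/
lemma not_mem_dropLast (he : IsEar α r S v σ q y γ) (hv : v ∉ S) {e : G.E}
    (hS : G.fst e ∈ S ∨ G.snd e ∈ S) : ∀ st ∈ q.dropLast, st.1 ≠ e := by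
  intro st hst hc
  have hmem : st ∈ q := (List.dropLast_sublist q).subset hst
  have hsrc := he.src_not_S hv st hmem
  have htgt := he.internal st hst
  subst hc
  rcases hS with h | h
  · rcases fst_src_or_tgt st with h' | h' <;> rw [h'] at h
    · exact hsrc h
    · exact htgt h
  · rcases snd_src_or_tgt st with h' | h' <;> rw [h'] at h
    · exact hsrc h
    · exact htgt h

end IsEar

-- ================== continuation inside H ==================

variable {α : Bool} {r : V} {H : G.Sub}

/-- inside an almost strong subgraph, every non-root vertex has a ditrail to the
root with either starting sign, ending with sign `!α`. -/
lemma hcont (hH : H.IsAlmostStrong α r) {y : V} (hy : y ∈ H.verts) (hyr : y ≠ r)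
    (β : Bool) : ∃ pc, G.DT pc y r β (!α) ∧ pc ≠ [] ∧ ∀ st ∈ pc, st.1 ∈ H.edges := by
  have key : G.ReachW H.edges β (!α) y r := by
    by_cases hβ : β = α
    · subst hβ; exact hH.1.2 y hy
    · have : β = !α := by cases β <;> cases α <;> simp_all
      subst this; exact hH.2.1 y hy hyr
  rw [reachW_iff_dt] at key
  obtain ⟨pc, hdt, hmem⟩ := key
  refine ⟨pc, hdt, ?_, hmem⟩
  intro hnil
  exact hyr (hdt.eq_of_nil hnil)

/-- an admissible ear continues inside `H` to a full ditrail to `r` ending `!α`. -/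
lemma ear_to_r (hH : H.IsAlmostStrong α r) {v : V} {σ : Bool} {q : List G.Step}
    {y : V} {γ : Bool} (he : IsEar α r H.verts v σ q y γ) (hv : v ∉ H.verts)
    {Es : Set G.E} (hq : ∀ st ∈ q, st.1 ∈ Es) (hHE : H.edges ⊆ Es) :
    ∃ p, G.DT p v r σ (!α) ∧ p ≠ [] ∧ ∀ st ∈ p, st.1 ∈ Es := by
  by_cases hyr : y = r
  · have hγ := he.adm hyr
    subst hyr
    exact ⟨q, hγ ▸ he.dt, he.ne, hq⟩
  · obtain ⟨pc, hdt, hne, hmem⟩ := hcont hH he.hy hyr (!γ)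
    refine ⟨q ++ pc, dt_append he.dt (by simpa using hdt) he.ne hne ?_, by simp [he.ne], ?_⟩
    · intro st hst hc
      rw [List.mem_map] at hc
      obtain ⟨st', hst', hst'e⟩ := hc
      have : st.1 ∈ H.edges := hst'e ▸ hmem st' hst'
      exact he.edge_not_both hv st hst ⟨H.fst_mem _ this, H.snd_mem _ this⟩
    · intro st hst
      rcases List.mem_append.1 hst with h | h
      · exact hq st h
      · exact hHE (hmem st h)

-- ================== the contradiction lemma ==================

lemma mem_rev {l : List G.Step} {s : G.Step} :
    s ∈ G.rev l ↔ ∃ s' ∈ l, s = G.flip s' := by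
  simp only [rev, List.mem_map, List.mem_reverse]
  constructor
  · rintro ⟨s', h1, rfl⟩; exact ⟨s', h1, rfl⟩
  · rintro ⟨s', h1, rfl⟩; exact ⟨s', h1, rfl⟩

lemma ear_both (hH : H.IsAlmostStrong α r) {v : V} (hv : v ∉ H.verts) {σ : Bool}
    {q₁ q₂ : List G.Step} {y₁ y₂ : V} {γ₁ γ₂ : Bool}
    (he₁ : IsEar α r H.verts v σ q₁ y₁ γ₁) (he₂ : IsEar α r H.verts v (!σ) q₂ y₂ γ₂)
    (h12 : ∀ st ∈ q₁.dropLast, st.1 ∉ q₂.map Prod.fst)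
    {Es : Set G.E} (hq₁ : ∀ st ∈ q₁, st.1 ∈ Es) (hq₂ : ∀ st ∈ q₂, st.1 ∈ Es)
    (hHE : H.edges ⊆ Es) {st : G.Step} (hst : st ∈ q₁) (hw : G.tgt st ∉ H.verts)
    (β : Bool) : ∃ p, G.DT p (G.tgt st) r β (!α) ∧ ∀ st' ∈ p, st'.1 ∈ Es := by
  obtain ⟨l₁, l₂, hq⟩ := List.append_of_mem hst
  subst hq
  obtain ⟨hA, hB0, hB⟩ := dt_decomp he₁.dt
  rcases eq_or_ne l₂ [] with rfl | hl₂
  · exact absurd ((hB0 rfl).1 ▸ he₁.hy) hw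
  have hdrop : (l₁ ++ st :: l₂).dropLast = l₁ ++ st :: l₂.dropLast := by
    rw [List.dropLast_append_of_ne_nil (by simp), List.dropLast_cons_of_ne_nil hl₂]
  have hl₁drop : ∀ s ∈ l₁ ++ [st], s ∈ (l₁ ++ st :: l₂).dropLast := by
    intro s hs
    rw [hdrop]
    rcases List.mem_append.1 hs with h | h
    · exact List.mem_append_left _ h
    · simp at h; subst h; exact List.mem_append_right _ (by simp)
  by_cases hβ : β = !(G.tsign st)
  · -- use the suffix ear
    subst hβ
    have Esuf : IsEar α r H.verts (G.tgt st) (!(G.tsign st)) l₂ y₁ γ₁ :=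
      ⟨hB hl₂, hl₂, he₁.hy, by
        intro s hs
        apply he₁.internal
        rw [hdrop]
        exact List.mem_append_right _ (List.mem_cons_of_mem _ hs), he₁.adm⟩
    obtain ⟨p, hdt, -, hmem⟩ := ear_to_r hH Esuf hw
      (fun s hs => hq₁ s (List.mem_append_right _ (List.mem_cons_of_mem _ hs))) hHE
    exact ⟨p, hdt, hmem⟩
  · -- use the reversed prefix followed by the other ear
    have hβ' : β = G.tsign st := by cases β <;> cases hb : G.tsign st <;> simp_all
    subst hβ'
    have hrdt := dt_rev hA
    have hrne : G.rev (l₁ ++ [st]) ≠ [] := by simp [rev]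
    have hdisj : ∀ s ∈ G.rev (l₁ ++ [st]), s.1 ∉ q₂.map Prod.fst := by
      intro s hs
      obtain ⟨s', hs', rfl⟩ := mem_rev.1 hs
      exact h12 s' (hl₁drop s' hs') 
    have hcomb := dt_append hrdt he₂.dt hrne he₂.ne hdisj
    have Erp : IsEar α r H.verts (G.tgt st) (G.tsign st) (G.rev (l₁ ++ [st]) ++ q₂) y₂ γ₂ := by
      refine ⟨hcomb, by simp [hrne], he₂.hy, ?_, he₂.adm⟩
      intro s hs
      rw [List.dropLast_append_of_ne_nil he₂.ne] at hs
      rcases List.mem_append.1 hs with h | h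
      · obtain ⟨s', hs', rfl⟩ := mem_rev.1 h
        rw [tgt_flip]
        exact he₁.src_not_S hv s'
          ((List.dropLast_sublist _).subset (hl₁drop s' hs'))
      · exact he₂.internal s h
    obtain ⟨p, hdt, -, hmem⟩ := ear_to_r hH Erp hw
      (by
        intro s hs
        rcases List.mem_append.1 hs with h | h
        · obtain ⟨s', hs', rfl⟩ := mem_rev.1 h
          exact hq₁ s' ((List.dropLast_sublist _).subset (hl₁drop s' hs'))
        · exact hq₂ s h) hHE
    exact ⟨p, hdt, hmem⟩

lemma kprime (hsub : ¬ G.Reach (!α) (!α) r r) (hH : H.IsAlmostStrong α r)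
    (hmax : ∀ K : G.Sub, K.IsAlmostStrong α r → K.le H)
    {v : V} (hv : v ∉ H.verts) {σ : Bool} {q₁ q₂ : List G.Step} {y₁ y₂ : V} {γ₁ γ₂ : Bool}
    (he₁ : IsEar α r H.verts v σ q₁ y₁ γ₁) (he₂ : IsEar α r H.verts v (!σ) q₂ y₂ γ₂)
    (h12 : ∀ st ∈ q₁.dropLast, st.1 ∉ q₂.map Prod.fst)
    (h21 : ∀ st ∈ q₂.dropLast, st.1 ∉ q₁.map Prod.fst) : False := by
  have he₁' : IsEar α r H.verts v (!(!σ)) q₁ y₁ γ₁ := by rw [Bool.not_not]; exact he₁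
  set Es : Set G.E := H.edges ∪ {e | ∃ st ∈ q₁ ++ q₂, st.1 = e} with hEs
  have hHE : H.edges ⊆ Es := fun e he => Or.inl he
  have hq₁E : ∀ st ∈ q₁, st.1 ∈ Es := fun st h => Or.inr ⟨st, List.mem_append_left _ h, rfl⟩
  have hq₂E : ∀ st ∈ q₂, st.1 ∈ Es := fun st h => Or.inr ⟨st, List.mem_append_right _ h, rfl⟩
  set Kv : Set V := H.verts ∪ {w | ∃ st ∈ q₁ ++ q₂, G.fst st.1 = w ∨ G.snd st.1 = w} with hKv
  have hfst : ∀ e ∈ Es, G.fst e ∈ Kv := by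
    rintro e (he | ⟨st, hst, rfl⟩)
    · exact Or.inl (H.fst_mem e he)
    · exact Or.inr ⟨st, hst, Or.inl rfl⟩
  have hsnd : ∀ e ∈ Es, G.snd e ∈ Kv := by
    rintro e (he | ⟨st, hst, rfl⟩)
    · exact Or.inl (H.snd_mem e he)
    · exact Or.inr ⟨st, hst, Or.inr rfl⟩
  set K : G.Sub := ⟨Kv, Es, hfst, hsnd⟩ with hK
  have hear : ∀ w, (∃ st ∈ q₁ ++ q₂, G.fst st.1 = w ∨ G.snd st.1 = w) → w ∉ H.verts →
      ∀ β, G.ReachW Es β (!α) w r := by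
    rintro w ⟨st, hst, hor⟩ hw β
    have hwst : w = G.src st ∨ w = G.tgt st := by
      rcases hor with h | h
      · rcases fst_src_or_tgt st with h' | h'
        · exact Or.inl (by rw [← h, h'])
        · exact Or.inr (by rw [← h, h'])
      · rcases snd_src_or_tgt st with h' | h'
        · exact Or.inl (by rw [← h, h'])
        · exact Or.inr (by rw [← h, h'])
    have hred : w = v ∨ (∃ st' ∈ q₁, w = G.tgt st') ∨ (∃ st' ∈ q₂, w = G.tgt st') := by
      rcases List.mem_append.1 hst with h1 | h1
      · rcases hwst with h | h
        · rcases dt_src_mem he₁.dt st h1 with h' | ⟨st', hst', h'⟩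
          · exact Or.inl (h.trans h')
          · exact Or.inr (Or.inl ⟨st', (List.dropLast_sublist _).subset hst', h.trans h'⟩)
        · exact Or.inr (Or.inl ⟨st, h1, h⟩)
      · rcases hwst with h | h
        · rcases dt_src_mem he₂.dt st h1 with h' | ⟨st', hst', h'⟩
          · exact Or.inl (h.trans h')
          · exact Or.inr (Or.inr ⟨st', (List.dropLast_sublist _).subset hst', h.trans h'⟩)
        · exact Or.inr (Or.inr ⟨st, h1, h⟩)
    rcases hred with rfl | ⟨st', hst', rfl⟩ | ⟨st', hst', rfl⟩
    · by_cases hβ : β = σ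
      · subst hβ
        obtain ⟨p, hdt, -, hmem⟩ := ear_to_r hH he₁ hw hq₁E hHE
        exact reachW_iff_dt.2 ⟨p, hdt, hmem⟩
      · have : β = !σ := by cases β <;> cases hb : σ <;> simp_all
        subst this
        obtain ⟨p, hdt, -, hmem⟩ := ear_to_r hH he₂ hw hq₂E hHE
        exact reachW_iff_dt.2 ⟨p, hdt, hmem⟩
    · obtain ⟨p, hdt, hmem⟩ := ear_both hH hv he₁ he₂ h12 hq₁E hq₂E hHE hst' hw β
      exact reachW_iff_dt.2 ⟨p, hdt, hmem⟩
    · obtain ⟨p, hdt, hmem⟩ := ear_both hH hv he₂ he₁' h21 hq₂E hq₁E hHE hst' hw β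
      exact reachW_iff_dt.2 ⟨p, hdt, hmem⟩
  have hAS : K.IsAlmostStrong α r := by
    refine ⟨⟨Or.inl hH.1.1, ?_⟩, ?_, ?_⟩
    · intro w hw
      rcases hw with hw | hw
      · exact reachW_mono hHE (hH.1.2 w hw)
      · by_cases hwH : w ∈ H.verts
        · exact reachW_mono hHE (hH.1.2 w hwH)
        · exact hear w hw hwH α
    · intro w hw hwr
      rcases hw with hw | hw
      · exact reachW_mono hHE (hH.2.1 w hw hwr)
      · by_cases hwH : w ∈ H.verts
        · exact reachW_mono hHE (hH.2.1 w hwH hwr)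
        · exact hear w hw hwH (!α)
    · intro hc
      exact hsub (reachW_mono (Set.subset_univ _) hc)
  apply hv
  apply (hmax K hAS).1
  right
  obtain ⟨st0, q₁', hq0⟩ := List.exists_cons_of_ne_nil he₁.ne
  have hsv : G.src st0 = v := he₁.dt.src_head st0 (by rw [hq0]; rfl)
  refine ⟨st0, List.mem_append_left _ (by rw [hq0]; simp), ?_⟩
  rcases src_fst_or_snd st0 with h | h
  · exact Or.inl (by rw [← h, hsv])
  · exact Or.inr (by rw [← h, hsv])

-- ====================== first segments ======================

lemma tgt_fst_or_snd {G : BG V} (st : G.Step) :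
    G.tgt st = G.fst st.1 ∨ G.tgt st = G.snd st.1 := by
  rcases st with ⟨e, d⟩; cases d
  · exact Or.inl rfl
  · exact Or.inr rfl

/-- extraction of the first segment (up to the first arrival in `H.verts`) of a
ditrail ending at `r` with sign `!α`, as an admissible ear. -/
lemma seg (hsub : ¬ G.Reach (!α) (!α) r r) (hrS : r ∈ H.verts) :
    ∀ (p : List G.Step) (w : V) (a : Bool), G.DT p w r a (!α) → p ≠ [] → w ∉ H.verts →
    ∃ q y γ, IsEar α r H.verts w a q y γ ∧ ∀ e ∈ q.map Prod.fst, e ∈ p.map Prod.fst := by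
  intro p
  induction p with
  | nil => intro w a _ hne _; exact absurd rfl hne
  | cons st p' ih =>
    intro w a hdt hne hw
    have hsx : G.src st = w := hdt.src_head st rfl
    have hss : G.ssign st = a := hdt.ssign_head st rfl
    by_cases ht : G.tgt st ∈ H.verts
    · refine ⟨[st], G.tgt st, G.tsign st, ⟨?_, by simp, ht, by simp, ?_⟩, by simp⟩
      · have := dt_singleton st
        rw [hsx, hss] at this
        exact this
      · intro hyr
        by_contra hγ
        have hγ' : G.tsign st = α := by rwa [Bool.eq_not_iff, not_not] at hγ
        rcases eq_or_ne p' [] with rfl | hp'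
        · have := hdt.tsign_last st rfl
          rw [hγ'] at this
          simpa using this
        · obtain ⟨hdt', -, -, -⟩ := dt_cons_inv hdt hp'
          rw [hyr, hγ'] at hdt'
          exact hsub (reachW_iff_dt.2 ⟨p', hdt', fun st _ => Set.mem_univ _⟩)
    · have hp' : p' ≠ [] := by
        rintro rfl
        exact ht (by rw [hdt.tgt_last st rfl]; exact hrS)
      obtain ⟨hdt', -, -, hnm⟩ := dt_cons_inv hdt hp'
      obtain ⟨q', y, γ, he', hsubq⟩ := ih (G.tgt st) (!(G.tsign st)) hdt' hp' ht
      refine ⟨st :: q', y, γ, ⟨?_, by simp, he'.hy, ?_, he'.adm⟩, ?_⟩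
      · have := dt_cons he'.dt he'.ne st rfl (by simp)
          (fun hc => hnm (hsubq st.1 hc))
        rw [hsx, hss] at this
        exact this
      · intro s hs
        rw [List.dropLast_cons_of_ne_nil he'.ne] at hs
        rcases List.mem_cons.1 hs with rfl | hs
        · exact ht
        · exact he'.internal s hs
      · intro e he
        rw [List.map_cons] at he
        rcases List.mem_cons.1 he with rfl | he'
        · simp
        · simp only [List.map_cons, List.mem_cons]
          exact Or.inr (hsubq e he')

/-- there is no edge joining a vertex outside `H` to `r` whose end at `r` carries
the sign `!α`. -/
lemma noopp (hsub : ¬ G.Reach (!α) (!α) r r) (hround : G.RoundAt α r)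
    (hH : H.IsAlmostStrong α r) (hmax : ∀ K : G.Sub, K.IsAlmostStrong α r → K.le H)
    {w : V} (hw : w ∉ H.verts) {st : G.Step} (hts : G.tsign st = !α)
    (htg : G.tgt st = r) (hsrc : G.src st = w) : False := by
  have hopp : G.OppNbr α r w := by
    rcases st with ⟨e, d⟩
    cases d
    · exact ⟨e, Or.inl ⟨htg, hsrc, hts⟩⟩
    · exact ⟨e, Or.inr ⟨htg, hsrc, hts⟩⟩
  obtain ⟨hP, hQ⟩ := hround w hopp
  have hZ : G.Reach (!(G.ssign st)) (!α) w r := by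
    by_cases h : G.ssign st = α
    · rw [h]; exact hQ
    · have h2 : G.ssign st = !α := by rwa [← Bool.not_not α, Bool.eq_not_iff, not_not] at h
      rw [h2, Bool.not_not]; exact hP
  rw [Reach, reachW_iff_dt] at hZ
  obtain ⟨pz, hdtz, -⟩ := hZ
  have hpzne : pz ≠ [] := by
    rintro rfl
    exact hw ((hdtz.eq_of_nil rfl) ▸ hH.1.1)
  obtain ⟨qz, yz, γz, hez, -⟩ := seg hsub hH.1.1 pz w (!(G.ssign st)) hdtz hpzne hw
  have hE1 : IsEar α r H.verts w (G.ssign st) [st] r (!α) := by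
    refine ⟨?_, by simp, hH.1.1, by simp, fun _ => rfl⟩
    have := dt_singleton st
    rw [hsrc, htg, hts] at this
    exact this
  refine kprime hsub hH hmax hw hE1 hez (by simp) ?_
  intro s hs
  have hS : G.fst st.1 ∈ H.verts ∨ G.snd st.1 ∈ H.verts := by
    rcases tgt_fst_or_snd st with h | h
    · exact Or.inl (by rw [← h, htg]; exact hH.1.1)
    · exact Or.inr (by rw [← h, htg]; exact hH.1.1)
  have := hez.not_mem_dropLast hw hS s hs
  simpa using this

-- ====================== contraction lemmas ======================

section Contract

variable {D : Set G.E} {S : Set V} {rr : V}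

lemma ctr_ssign (eh : ((G.delE D).contract S rr).E) (d : Bool) :
    ((G.delE D).contract S rr).ssign (eh, d) = G.ssign (eh.1.1, d) := by
  cases d <;> rfl

lemma ctr_tsign (eh : ((G.delE D).contract S rr).E) (d : Bool) :
    ((G.delE D).contract S rr).tsign (eh, d) = G.tsign (eh.1.1, d) := by
  cases d <;> rfl

lemma ctr_src_of_not_mem (eh : ((G.delE D).contract S rr).E) (d : Bool)
    (h : G.src (eh.1.1, d) ∉ S) :
    ((G.delE D).contract S rr).src (eh, d) = G.src (eh.1.1, d) := by
  cases d
  · exact if_neg h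
  · exact if_neg h

lemma ctr_src_of_mem (eh : ((G.delE D).contract S rr).E) (d : Bool)
    (h : G.src (eh.1.1, d) ∈ S) :
    ((G.delE D).contract S rr).src (eh, d) = rr := by
  cases d
  · exact if_pos h
  · exact if_pos h

lemma ctr_tgt_of_not_mem (eh : ((G.delE D).contract S rr).E) (d : Bool)
    (h : G.tgt (eh.1.1, d) ∉ S) :
    ((G.delE D).contract S rr).tgt (eh, d) = G.tgt (eh.1.1, d) := by
  cases d
  · exact if_neg h
  · exact if_neg h

lemma ctr_tgt_of_mem (eh : ((G.delE D).contract S rr).E) (d : Bool)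
    (h : G.tgt (eh.1.1, d) ∈ S) :
    ((G.delE D).contract S rr).tgt (eh, d) = rr := by
  cases d
  · exact if_pos h
  · exact if_pos h

end Contract

/-- projection of an admissible ear not ending at `r` to the contracted graph -/
lemma proj_aux {D : Set G.E}
    (hD : D = {e : G.E | (G.fst e = r ∧ G.snd e ∉ H.verts) ∨
      (G.snd e = r ∧ G.fst e ∉ H.verts)}) (hrS : r ∈ H.verts) :
    ∀ (q : List G.Step) (w : V) (a γ : Bool) (y : V),
      G.DT q w y a γ → q ≠ [] → w ∉ H.verts →
      (∀ st ∈ q.dropLast, G.tgt st ∉ H.verts) → (∀ st ∈ q, G.src st ∉ H.verts) →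
      y ∈ H.verts → y ≠ r →
      ∃ p : List ((G.delE D).contract H.verts r).Step,
        ((G.delE D).contract H.verts r).DT p w r a γ ∧
          ∀ s ∈ p, s.1.1.1 ∈ q.map Prod.fst := by
  intro q
  induction q with
  | nil => intro w a γ y _ hne; exact absurd rfl hne
  | cons st q' ih =>
    intro w a γ y hdt hne hw hint hsrc hy hyr
    have hsx : G.src st = w := hdt.src_head st rfl
    have hss : G.ssign st = a := hdt.ssign_head st rfl
    have hsnS : G.src st ∉ H.verts := hsrc st (by simp)
    have htr : G.tgt st ≠ r := by
      rcases eq_or_ne q' [] with rfl | hq'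
      · rw [hdt.tgt_last st rfl]; exact hyr
      · intro hc
        exact hint st (by rw [List.dropLast_cons_of_ne_nil hq']; simp) (hc ▸ hrS)
    have hsr : G.src st ≠ r := fun hc => hsnS (hc ▸ hrS)
    have hDe : st.1 ∉ D := by
      rw [hD]
      rintro (⟨h1, -⟩ | ⟨h1, -⟩)
      · rcases fst_src_or_tgt st with h | h
        · exact hsr (by rw [← h, h1])
        · exact htr (by rw [← h, h1])
      · rcases snd_src_or_tgt st with h | h
        · exact hsr (by rw [← h, h1])
        · exact htr (by rw [← h, h1])
    have hnb : ¬ (G.fst st.1 ∈ H.verts ∧ G.snd st.1 ∈ H.verts) := by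
      rintro ⟨h1, h2⟩
      rcases src_fst_or_snd st with h | h
      · exact hsnS (h ▸ h1)
      · exact hsnS (h ▸ h2)
    set eh : ((G.delE D).contract H.verts r).E := ⟨⟨st.1, hDe⟩, hnb⟩ with heh
    have hsrc' : ((G.delE D).contract H.verts r).src (eh, st.2) = w := by
      rw [ctr_src_of_not_mem eh st.2 hsnS, hsx]
    have hssign' : ((G.delE D).contract H.verts r).ssign (eh, st.2) = a := by
      rw [ctr_ssign, hss]
    rcases eq_or_ne q' [] with rfl | hq'
    · have hty : G.tgt st = y := hdt.tgt_last st rfl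
      have hts : G.tsign st = γ := hdt.tsign_last st rfl
      refine ⟨[(eh, st.2)], ?_, by simp [heh]⟩
      have := dt_singleton (G := (G.delE D).contract H.verts r) (eh, st.2)
      rw [hsrc', hssign', ctr_tgt_of_mem eh st.2 (by rw [hty]; exact hy),
        ctr_tsign, hts] at this
      exact this
    · obtain ⟨hdt', -, -, hnm⟩ := dt_cons_inv hdt hq'
      have ht : G.tgt st ∉ H.verts :=
        hint st (by rw [List.dropLast_cons_of_ne_nil hq']; simp)
      obtain ⟨p', hp', hsubp⟩ := ih (G.tgt st) (!(G.tsign st)) γ y hdt' hq' ht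
        (fun s hs => hint s (by rw [List.dropLast_cons_of_ne_nil hq']; simp [hs]))
        (fun s hs => hsrc s (by simp [hs])) hy hyr
      have hp'ne : p' ≠ [] := by
        rintro rfl
        exact ht ((hp'.eq_of_nil rfl) ▸ hrS)
      refine ⟨(eh, st.2) :: p', ?_, ?_⟩
      · have := dt_cons hp' hp'ne (eh, st.2) (ctr_tgt_of_not_mem eh st.2 ht)
          (by rw [ctr_tsign]; simp [heh])
          (by
            intro hc
            rw [List.mem_map] at hc
            obtain ⟨s, hs, hse⟩ := hc
            apply hnm
            have := hsubp s hs
            have hval : s.1.1.1 = st.1 := by rw [hse]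
            rwa [hval] at this)
        rw [hsrc', hssign'] at this
        exact this
      · intro s hs
        rcases List.mem_cons.1 hs with rfl | hs
        · simp [heh]
        · have := hsubp s hs
          rw [List.map_cons]
          exact List.mem_cons_of_mem _ this

/-- every vertex outside `H` reaches `r` in the contracted graph by an `α`-ditrail. -/
lemma reachAlpha (hG : G.IsRadial α r) (hsub : ¬ G.Reach (!α) (!α) r r)
    (hround : G.RoundAt α r) (hH : H.IsAlmostStrong α r)
    (hmax : ∀ K : G.Sub, K.IsAlmostStrong α r → K.le H) {D : Set G.E}
    (hD : D = {e : G.E | (G.fst e = r ∧ G.snd e ∉ H.verts) ∨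
      (G.snd e = r ∧ G.fst e ∉ H.verts)})
    {v : V} (hv : v ∉ H.verts) :
    ((G.delE D).contract H.verts r).ReachS α v r := by
  have hrS : r ∈ H.verts := hH.1.1
  have hGv := hG v
  rw [Reach, reachW_iff_dt] at hGv
  obtain ⟨p, hdt, -⟩ := hGv
  have hpne : p ≠ [] := by
    rintro rfl
    exact hv ((hdt.eq_of_nil rfl) ▸ hrS)
  obtain ⟨q, y, γ, he, -⟩ := seg hsub hrS p v α hdt hpne hv
  by_cases hyr : y = r
  · -- impossible: the last edge would be an opposite edge at r from outside H
    exfalso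
    have hqne := he.ne
    have hlast : q.getLast? = some (q.getLast hqne) := List.getLast?_eq_getLast hqne
    have htg : G.tgt (q.getLast hqne) = r := by rw [he.dt.tgt_last _ hlast]; exact hyr
    have hts : G.tsign (q.getLast hqne) = !α := by
      rw [he.dt.tsign_last _ hlast]; exact he.adm hyr
    exact noopp hsub hround hH hmax
      (he.src_not_S hv _ (List.getLast_mem hqne)) hts htg rfl
  · obtain ⟨p', hp', -⟩ := proj_aux hD hrS q v α γ y he.dt he.ne hv he.internal
      (he.src_not_S hv) he.hy hyr
    exact ⟨γ, reachW_iff_dt.2 ⟨p', hp', fun _ _ => Set.mem_univ _⟩⟩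

/-- lifting a ditrail of the contracted graph: its first segment is an ear of `G`
not ending at `r`. -/
lemma lift_aux {D : Set G.E}
    (hD : D = {e : G.E | (G.fst e = r ∧ G.snd e ∉ H.verts) ∨
      (G.snd e = r ∧ G.fst e ∉ H.verts)}) (hrS : r ∈ H.verts) :
    ∀ (p : List ((G.delE D).contract H.verts r).Step) (w : V) (a b : Bool),
      ((G.delE D).contract H.verts r).DT p w r a b → p ≠ [] → w ∉ H.verts →
      ∃ (q : List G.Step) (y : V) (γ : Bool), IsEar α r H.verts w a q y γ ∧ y ≠ r ∧
        ∀ s ∈ q, ∃ sh ∈ p, s.1 = sh.1.1.1 := by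
  intro p
  induction p with
  | nil => intro w a b _ hne _; exact absurd rfl hne
  | cons st' p' ih =>
    intro w a b hdt hne hw
    obtain ⟨eh, d⟩ := st'
    have hsx : ((G.delE D).contract H.verts r).src (eh, d) = w := hdt.src_head _ rfl
    have hss : ((G.delE D).contract H.verts r).ssign (eh, d) = a := hdt.ssign_head _ rfl
    have hsnS : G.src (eh.1.1, d) ∉ H.verts := by
      intro hc
      rw [ctr_src_of_mem eh d hc] at hsx
      exact hw (hsx ▸ hrS)
    have hsw : G.src (eh.1.1, d) = w := by
      rw [ctr_src_of_not_mem eh d hsnS] at hsx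
      exact hsx
    have hsa : G.ssign (eh.1.1, d) = a := by rw [ctr_ssign] at hss; exact hss
    by_cases ht : G.tgt (eh.1.1, d) ∈ H.verts
    · have hyne : G.tgt (eh.1.1, d) ≠ r := by
        intro hyr
        apply eh.1.2
        cases d
        · exact hD.symm ▸ (Or.inl ⟨hyr, hsnS⟩ :
            eh.1.1 ∈ {e : G.E | (G.fst e = r ∧ G.snd e ∉ H.verts) ∨
              (G.snd e = r ∧ G.fst e ∉ H.verts)})
        · exact hD.symm ▸ (Or.inr ⟨hyr, hsnS⟩ :
            eh.1.1 ∈ {e : G.E | (G.fst e = r ∧ G.snd e ∉ H.verts) ∨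
              (G.snd e = r ∧ G.fst e ∉ H.verts)})
      refine ⟨[(eh.1.1, d)], G.tgt (eh.1.1, d), G.tsign (eh.1.1, d),
        ⟨?_, by simp, ht, by simp, fun hyr => absurd hyr hyne⟩, hyne, ?_⟩
      · have := dt_singleton (G := G) (eh.1.1, d)
        rw [hsw, hsa] at this
        exact this
      · intro s hs
        rcases List.mem_cons.1 hs with rfl | hs
        · exact ⟨(eh, d), by simp, rfl⟩
        · simp at hs
    · have hp'ne : p' ≠ [] := by
        rintro rfl
        have hlast := hdt.tgt_last (eh, d) (by simp)
        rw [ctr_tgt_of_not_mem eh d ht] at hlast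
        exact ht (hlast ▸ hrS)
      obtain ⟨hdt', -, -, hnm⟩ := dt_cons_inv hdt hp'ne
      rw [ctr_tgt_of_not_mem eh d ht, ctr_tsign] at hdt'
      obtain ⟨q', y, γ, he', hyr, hsubq⟩ := ih (G.tgt (eh.1.1, d))
        (!(G.tsign (eh.1.1, d))) b hdt' hp'ne ht
      refine ⟨(eh.1.1, d) :: q', y, γ, ⟨?_, by simp, he'.hy, ?_, he'.adm⟩, hyr, ?_⟩
      · have := dt_cons he'.dt he'.ne (eh.1.1, d) rfl (by simp)
          (by
            intro hc
            rw [List.mem_map] at hc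
            obtain ⟨s, hs, hse⟩ := hc
            obtain ⟨sh, hsh, hval⟩ := hsubq s hs
            apply hnm
            have : sh.1 = (eh, d).1 := by
              apply Subtype.ext
              apply Subtype.ext
              rw [← hval, hse]
            rw [← this]
            exact List.mem_map_of_mem (f := Prod.fst) hsh)
        rw [hsw, hsa] at this
        exact this
      · intro s hs
        rw [List.dropLast_cons_of_ne_nil he'.ne] at hs
        rcases List.mem_cons.1 hs with rfl | hs
        · exact ht
        · exact he'.internal s hs
      · intro s hs
        rcases List.mem_cons.1 hs with rfl | hs
        · exact ⟨(eh, d), by simp, rfl⟩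
        · obtain ⟨sh, hsh, hval⟩ := hsubq s hs
          exact ⟨sh, List.mem_cons_of_mem _ hsh, hval⟩

end BG

theorem stmt19 {V : Type} {G : BG V} (α : Bool) (r : V)
    (hG : G.IsRadial α r) (hsub : ¬ G.Reach (!α) (!α) r r)
    (hround : G.RoundAt α r)
    (H : G.Sub) (hH : H.IsAlmostStrong α r)
    (hmax : ∀ K : G.Sub, K.IsAlmostStrong α r → K.le H)
    (D : Set G.E)
    (hD : D = {e : G.E | (G.fst e = r ∧ G.snd e ∉ H.verts) ∨
      (G.snd e = r ∧ G.fst e ∉ H.verts)}) :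
    (∀ v ∈ H.vertsᶜ ∪ {r}, ((G.delE D).contract H.verts r).ReachS α v r) ∧
    ((G.delE D).contract H.verts r).SharpAt α r := by
  have hrS : r ∈ H.verts := hH.1.1
  constructor
  · rintro v (hv | hv)
    · exact BG.reachAlpha hG hsub hround hH hmax hD hv
    · have hvr : v = r := hv
      rw [hvr]
      refine ⟨!α, BG.reachW_iff_dt.2 ⟨[], ?_, by simp⟩⟩
      have := BG.dt_nil (G := (G.delE D).contract H.verts r) (x := r) (b := !α)
      simpa using this
  · intro v hadj
    obtain ⟨eh, hor⟩ := hadj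
    -- extract a step of `G` from `v` into `H.verts \ {r}`
    have hext : ∃ st₀ : G.Step, st₀.1 = eh.1.1 ∧ G.src st₀ = v ∧ v ∉ H.verts ∧
        G.tgt st₀ ∈ H.verts ∧ G.tgt st₀ ≠ r := by
      rcases hor with ⟨h1, h2⟩ | ⟨h1, h2⟩
      · -- fst ↦ v, snd ↦ r
        have hs2 : G.snd eh.1.1 ∈ H.verts := by
          by_contra hc
          rw [show ((G.delE D).contract H.verts r).snd eh = G.snd eh.1.1 from if_neg hc]
            at h2
          exact hc (h2 ▸ hrS)
        have hf1 : G.fst eh.1.1 ∉ H.verts := fun hc => eh.2 ⟨hc, hs2⟩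
        have hfv : G.fst eh.1.1 = v := by
          rw [show ((G.delE D).contract H.verts r).fst eh = G.fst eh.1.1 from if_neg hf1]
            at h1
          exact h1
        have hsnr : G.snd eh.1.1 ≠ r := by
          intro hc
          exact eh.1.2 (hD.symm ▸ (Or.inr ⟨hc, hf1⟩ :
            eh.1.1 ∈ {e : G.E | (G.fst e = r ∧ G.snd e ∉ H.verts) ∨
              (G.snd e = r ∧ G.fst e ∉ H.verts)}))
        exact ⟨(eh.1.1, true), rfl, hfv, hfv ▸ hf1, hs2, hsnr⟩
      · -- fst ↦ r, snd ↦ v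
        have hs1 : G.fst eh.1.1 ∈ H.verts := by
          by_contra hc
          rw [show ((G.delE D).contract H.verts r).fst eh = G.fst eh.1.1 from if_neg hc]
            at h1
          exact hc (h1 ▸ hrS)
        have hf2 : G.snd eh.1.1 ∉ H.verts := fun hc => eh.2 ⟨hs1, hc⟩
        have hfv : G.snd eh.1.1 = v := by
          rw [show ((G.delE D).contract H.verts r).snd eh = G.snd eh.1.1 from if_neg hf2]
            at h2
          exact h2
        have hsnr : G.fst eh.1.1 ≠ r := by
          intro hc
          exact eh.1.2 (hD.symm ▸ (Or.inl ⟨hc, hf2⟩ :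
            eh.1.1 ∈ {e : G.E | (G.fst e = r ∧ G.snd e ∉ H.verts) ∨
              (G.snd e = r ∧ G.fst e ∉ H.verts)}))
        exact ⟨(eh.1.1, false), rfl, hfv, hfv ▸ hf2, hs1, hsnr⟩
    obtain ⟨st₀, -, hsv, hv, hty, htyr⟩ := hext
    have hE1 : BG.IsEar α r H.verts v (G.ssign st₀) [st₀] (G.tgt st₀) (G.tsign st₀) := by
      refine ⟨?_, by simp, hty, by simp, fun hc => absurd hc htyr⟩
      have := BG.dt_singleton st₀
      rw [hsv] at this
      exact this
    have h21gen : ∀ {q : List G.Step} {y : V} {σ γ : Bool},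
        BG.IsEar α r H.verts v σ q y γ →
        ∀ s ∈ q.dropLast, s.1 ∉ [st₀].map Prod.fst := by
      intro q y σ γ he s hs
      have hS : G.fst st₀.1 ∈ H.verts ∨ G.snd st₀.1 ∈ H.verts := by
        rcases BG.tgt_fst_or_snd st₀ with h | h
        · exact Or.inl (h ▸ hty)
        · exact Or.inr (h ▸ hty)
      have := he.not_mem_dropLast hv hS s hs
      simpa using this
    constructor
    · exact BG.reachAlpha hG hsub hround hH hmax hD hv
    · rintro ⟨β, hre⟩
      rw [BG.Reach, BG.reachW_iff_dt] at hre
      obtain ⟨p, hdtp, -⟩ := hre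
      have hpne : p ≠ [] := by
        rintro rfl
        exact hv ((hdtp.eq_of_nil rfl) ▸ hrS)
      obtain ⟨q, y, γ, he₂, -, -⟩ := BG.lift_aux hD hrS p v (!α) β hdtp hpne hv
      by_cases hμ : G.ssign st₀ = α
      · rw [hμ] at hE1
        exact BG.kprime hsub hH hmax hv hE1 he₂ (by simp) (h21gen he₂)
      · have hμ' : G.ssign st₀ = !α := by
          rwa [← Bool.not_not α, Bool.eq_not_iff, not_not] at hμ
        rw [hμ'] at hE1
        -- an α-starting ear from radiality
        have hGv := hG v
        rw [BG.Reach, BG.reachW_iff_dt] at hGv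
        obtain ⟨p₂, hdt₂, -⟩ := hGv
        have hp₂ne : p₂ ≠ [] := by
          rintro rfl
          exact hv ((hdt₂.eq_of_nil rfl) ▸ hrS)
        obtain ⟨qP, yP, γP, heP, -⟩ := BG.seg hsub hrS p₂ v α hdt₂ hp₂ne hv
        have heP' : BG.IsEar α r H.verts v (!(!α)) qP yP γP := by
          rw [Bool.not_not]
          exact heP
        exact BG.kprime hsub hH hmax hv hE1 heP' (by simp) (h21gen heP)
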